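/- arXiv:0807.0339 — 4 statements merged into one kernel-verified Lean document; each statement's English description precedes it below -/
import Mathlib

section
/- Let g be a complex semisimple Lie algebra with sl2-triple (e,h,f), weight decomposition g = ⊕ g(i), ℓ ⊂ g(-1) a Lagrangian subspace for the symplectic form (x,y) ↦ κ(e,[x,y]), and m := ℓ ⊕ (⊕_{i ≤ -2} g(i)). Then m is a nilpotent Lie subalgebra of g. -/
open Module LieAlgebra

/-!
The integer eigenspaces `g(i)` of `ad h` satisfy `⁅g(i), g(j)⁆ ⊆ g(i + j)`, so the subspaces
`F k = ⨆_{i ≤ k} g(i)` satisfy `⁅F a, F b⁆ ⊆ F (a + b)`. Since `F (-2) ≤ m ≤ F (-1)`, `m` is closed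
under the bracket, and for `x ∈ m` the map `ad x` sends `F k` into `F (k - 1)`. As `L` is finite
dimensional, `F k = 0` once `k` is below every eigenvalue of `ad h`, so each `ad x` is nilpotent on
`m` and Engel's theorem applies.
-/

namespace LieAlgebra

section CommRing

variable {R L : Type*} [CommRing R] [LieRing L] [LieAlgebra R L]

theorem lie_mem_eigenspace_ad_add {h x y : L} {a b : R}
    (hx : x ∈ (ad R L h).eigenspace a) (hy : y ∈ (ad R L h).eigenspace b) :
    ⁅x, y⁆ ∈ (ad R L h).eigenspace (a + b) := by
  rw [End.mem_eigenspace_iff] at hx hy ⊢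
  simp only [ad_apply] at hx hy ⊢
  rw [leibniz_lie, hx, hy, smul_lie, lie_smul, add_smul]

variable (R) in
def adEigenspaceFiltration (h : L) (k : ℤ) : Submodule R L :=
  ⨆ i : ℤ, ⨆ _ : i ≤ k, (ad R L h).eigenspace (i : R)

theorem eigenspace_le_adEigenspaceFiltration {h : L} {i k : ℤ} (hik : i ≤ k) :
    (ad R L h).eigenspace (i : R) ≤ adEigenspaceFiltration R h k :=
  le_iSup₂_of_le i hik le_rfl

theorem adEigenspaceFiltration_mono (h : L) : Monotone (adEigenspaceFiltration R h) :=
  fun _ _ hab => iSup₂_le fun _ hi => eigenspace_le_adEigenspaceFiltration (hi.trans hab)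

theorem lie_mem_adEigenspaceFiltration_add {h x y : L} {a b : ℤ}
    (hx : x ∈ adEigenspaceFiltration R h a) (hy : y ∈ adEigenspaceFiltration R h b) :
    ⁅x, y⁆ ∈ adEigenspaceFiltration R h (a + b) := by
  suffices Submodule.map₂ (ad R L : L →ₗ[R] End R L) (adEigenspaceFiltration R h a)
      (adEigenspaceFiltration R h b) ≤ adEigenspaceFiltration R h (a + b) from
    this (Submodule.apply_mem_map₂ _ hx hy)
  unfold adEigenspaceFiltration
  rw [Submodule.map₂_iSup_left]
  refine iSup_le fun i => ?_
  rw [Submodule.map₂_iSup_left]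
  refine iSup_le fun hi => ?_
  rw [Submodule.map₂_iSup_right]
  refine iSup_le fun j => ?_
  rw [Submodule.map₂_iSup_right]
  refine iSup_le fun hj => Submodule.map₂_le.mpr fun x hx y hy => ?_
  have := lie_mem_eigenspace_ad_add hx hy
  rw [← Int.cast_add] at this
  exact eigenspace_le_adEigenspaceFiltration (add_le_add hi hj) this

theorem ad_pow_apply_mem_adEigenspaceFiltration {h x y : L} {a k : ℤ}
    (hx : x ∈ adEigenspaceFiltration R h a) (hy : y ∈ adEigenspaceFiltration R h k) (n : ℕ) :
    (ad R L x ^ n) y ∈ adEigenspaceFiltration R h (k + n * a) := by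
  induction n with
  | zero => simpa using hy
  | succ n ih =>
    rw [pow_succ', End.mul_apply, ad_apply, Nat.cast_succ, add_one_mul, ← add_assoc, add_comm]
    exact lie_mem_adEigenspaceFiltration_add hx ih

end CommRing

section Field

variable {R L : Type*} [Field R] [CharZero R] [LieRing L] [LieAlgebra R L] [FiniteDimensional R L]

theorem exists_adEigenspaceFiltration_eq_bot (h : L) :
    ∃ N : ℤ, ∀ k ≤ N, adEigenspaceFiltration R h k = ⊥ := by
  obtain ⟨N, hN⟩ : BddBelow {i : ℤ | (ad R L h).HasEigenvalue (i : R)} :=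
    ((ad R L h).finite_hasEigenvalue.preimage Int.cast_injective.injOn).bddBelow
  refine ⟨N - 1, fun k hk => eq_bot_iff.mpr <| iSup₂_le fun i hi => ?_⟩
  by_contra hne
  have := hN (End.hasEigenvalue_iff.mpr fun h0 => hne (h0 ▸ le_rfl))
  omega

theorem _root_.LieSubalgebra.isNilpotent_of_le_adEigenspaceFiltration {h : L}
    (K : LieSubalgebra R L) (hK : K.toSubmodule ≤ adEigenspaceFiltration R h (-1)) :
    LieRing.IsNilpotent K := by
  obtain ⟨N, hN⟩ := exists_adEigenspaceFiltration_eq_bot (R := R) h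
  rw [isNilpotent_iff_forall (R := R)]
  refine fun x => ⟨(-N).toNat, LinearMap.ext fun y => Subtype.ext ?_⟩
  have := ad_pow_apply_mem_adEigenspaceFiltration (hK x.2) (hK y.2) (-N).toNat
  rw [hN _ (by omega), Submodule.mem_bot] at this
  rw [LieSubalgebra.coe_ad_pow, this, LinearMap.zero_apply, ZeroMemClass.coe_zero]

end Field

end LieAlgebra

theorem stmt1_general (L : Type*) [LieRing L] [LieAlgebra ℂ L] [Module.Finite ℂ L]
    (h : L)
    (ℓ : Submodule ℂ L)
    (hℓsub : ℓ ≤ Module.End.eigenspace (LieAlgebra.ad ℂ L h) (-1 : ℂ))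
    (m : Submodule ℂ L)
    (hm : m = ℓ ⊔ ⨆ i : ℤ, ⨆ _ : i ≤ -2,
      Module.End.eigenspace (LieAlgebra.ad ℂ L h) (i : ℂ)) :
    ∃ K : LieSubalgebra ℂ L, K.toSubmodule = m ∧ LieRing.IsNilpotent K := by
  change m = ℓ ⊔ adEigenspaceFiltration ℂ h (-2) at hm
  have hℓ : ℓ ≤ adEigenspaceFiltration ℂ h (-1) := by
    have := eigenspace_le_adEigenspaceFiltration (R := ℂ) (h := h) (le_refl (-1 : ℤ))
    rw [Int.cast_neg, Int.cast_one] at this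
    exact hℓsub.trans this
  have hm_le : m ≤ adEigenspaceFiltration ℂ h (-1) :=
    hm ▸ sup_le hℓ (adEigenspaceFiltration_mono h (by norm_num))
  have hm_lie {x y : L} (hx : x ∈ m) (hy : y ∈ m) : ⁅x, y⁆ ∈ m := by
    have := lie_mem_adEigenspaceFiltration_add (hm_le hx) (hm_le hy)
    rw [hm]
    exact Submodule.mem_sup_right this
  let K : LieSubalgebra ℂ L := { m with lie_mem' := hm_lie }
  exact ⟨K, rfl, K.isNilpotent_of_le_adEigenspaceFiltration hm_le⟩

/-- Let `g` be a complex semisimple Lie algebra with `sl₂`-triple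
`(e, h, f)`, weight decomposition `g = ⊕ g(i)` for `ad h`, and `ℓ ⊆ g(-1)` a Lagrangian
subspace for the symplectic form `(x, y) ↦ κ(e, ⁅x, y⁆)` (isotropic and maximal isotropic).
Then `m := ℓ ⊕ (⊕_{i ≤ -2} g(i))` is a nilpotent Lie subalgebra of `g`, i.e. there is a
Lie subalgebra of `g` whose underlying subspace is `ℓ ⊔ ⨆_{i ≤ -2} g(i)` and this Lie
subalgebra is nilpotent. -/
theorem stmt1 (L : Type*) [LieRing L] [LieAlgebra ℂ L] [Module.Finite ℂ L]
    [LieAlgebra.IsSemisimple ℂ L] (h e f : L) (ht : IsSl2Triple h e f)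
    (ℓ : Submodule ℂ L)
    (hℓsub : ℓ ≤ Module.End.eigenspace (LieAlgebra.ad ℂ L h) (-1 : ℂ))
    (hℓiso : ∀ x ∈ ℓ, ∀ y ∈ ℓ, killingForm ℂ L e ⁅x, y⁆ = 0)
    (hℓmax : ∀ x ∈ Module.End.eigenspace (LieAlgebra.ad ℂ L h) (-1 : ℂ),
      (∀ y ∈ ℓ, killingForm ℂ L e ⁅x, y⁆ = 0) → x ∈ ℓ)
    (m : Submodule ℂ L)
    (hm : m = ℓ ⊔ ⨆ i : ℤ, ⨆ _ : i ≤ -2,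
      Module.End.eigenspace (LieAlgebra.ad ℂ L h) (i : ℂ)) :
    ∃ K : LieSubalgebra ℂ L, K.toSubmodule = m ∧ LieRing.IsNilpotent K :=
  stmt1_general L h ℓ hℓsub m hm
end

section
/- With m defined as above, the linear functional χ := κ(e,·) vanishes on [m,m]. -/
section Aux

variable {L : Type*} [LieRing L] [LieAlgebra ℂ L] [Module.Finite ℂ L]

/-- If `z` is an `ad h` eigenvector with eigenvalue `c ≠ -2` and `⁅h, e⁆ = 2 • e`,
then `κ(e, z) = 0`. -/
lemma aux_killing_eigen (h e z : L) (he : ⁅h, e⁆ = 2 • e) (c : ℂ)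
    (hz : ⁅h, z⁆ = c • z) (hc : c ≠ -2) : killingForm ℂ L e z = 0 := by
  have H := LieModule.traceForm_apply_lie_apply' ℂ L L h e z
  rw [he, hz] at H
  simp only [map_nsmul, map_smul, LinearMap.smul_apply, smul_eq_mul, nsmul_eq_mul,
    Nat.cast_ofNat] at H
  have H2 : (2 + c) * killingForm ℂ L e z = 0 := by
    show (2 + c) * LieModule.traceForm ℂ L L e z = 0
    linear_combination H
  rcases mul_eq_zero.mp H2 with h1 | h1
  · exact absurd (by linear_combination h1) hc
  · exact h1

omit [Module.Finite ℂ L] in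
lemma aux_lie_eigen (h x y : L) (a b : ℂ) (hx : ⁅h, x⁆ = a • x) (hy : ⁅h, y⁆ = b • y) :
    ⁅h, ⁅x, y⁆⁆ = (a + b) • ⁅x, y⁆ := by
  rw [leibniz_lie, hx, hy, smul_lie, lie_smul, add_smul]

end Aux

/-- With `m = ℓ ⊕ (⊕_{i ≤ -2} g(i))` as above (`ℓ ⊆ g(-1)` Lagrangian
for the form `(x, y) ↦ χ(⁅x, y⁆)` where `χ = κ(e, ·)`), the linear functional
`χ = κ(e, ·)` vanishes on `[m, m]`. -/
theorem stmt2 (L : Type*) [LieRing L] [LieAlgebra ℂ L] [Module.Finite ℂ L]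
    [LieAlgebra.IsSemisimple ℂ L] (h e f : L) (ht : IsSl2Triple h e f)
    (ℓ : Submodule ℂ L)
    (hℓsub : ℓ ≤ Module.End.eigenspace (LieAlgebra.ad ℂ L h) (-1 : ℂ))
    (hℓiso : ∀ x ∈ ℓ, ∀ y ∈ ℓ, killingForm ℂ L e ⁅x, y⁆ = 0)
    (hℓmax : ∀ x ∈ Module.End.eigenspace (LieAlgebra.ad ℂ L h) (-1 : ℂ),
      (∀ y ∈ ℓ, killingForm ℂ L e ⁅x, y⁆ = 0) → x ∈ ℓ)
    (m : Submodule ℂ L)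
    (hm : m = ℓ ⊔ ⨆ i : ℤ, ⨆ _ : i ≤ -2,
      Module.End.eigenspace (LieAlgebra.ad ℂ L h) (i : ℂ)) :
    ∀ x ∈ m, ∀ y ∈ m, killingForm ℂ L e ⁅x, y⁆ = 0 := by
  have he2 : ⁅h, e⁆ = 2 • e := ht.lie_h_e_nsmul
  have eig : ∀ (c : ℂ) (x : L), x ∈ Module.End.eigenspace (LieAlgebra.ad ℂ L h) c →
      ⁅h, x⁆ = c • x := by
    intro c x hx
    have := Module.End.mem_eigenspace_iff.mp hx
    rwa [LieAlgebra.ad_apply] at this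
  -- For each `x`, the set of `y` with `κ(e,⁅x,y⁆) = 0` is a submodule (a kernel).
  set K : L → Submodule ℂ L := fun x =>
    LinearMap.ker ((killingForm ℂ L e).comp ((LieAlgebra.ad ℂ L x : Module.End ℂ L)
      : L →ₗ[ℂ] L)) with hK
  have hKmem : ∀ x y, y ∈ K x ↔ killingForm ℂ L e ⁅x, y⁆ = 0 := by
    intro x y
    simp [hK, LinearMap.mem_ker, LieAlgebra.ad_apply]
  -- generator-level statement
  have gen : ∀ x, (x ∈ ℓ ∨ ∃ i : ℤ, i ≤ -2 ∧ ⁅h, x⁆ = (i : ℂ) • x) →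
      ∀ y, (y ∈ ℓ ∨ ∃ j : ℤ, j ≤ -2 ∧ ⁅h, y⁆ = (j : ℂ) • y) →
      killingForm ℂ L e ⁅x, y⁆ = 0 := by
    intro x hx y hy
    rcases hx with hxℓ | ⟨i, hi, hix⟩
    · rcases hy with hyℓ | ⟨j, hj, hjy⟩
      · exact hℓiso x hxℓ y hyℓ
      · have hx' : ⁅h, x⁆ = (-1 : ℂ) • x := eig _ _ (hℓsub hxℓ)
        refine aux_killing_eigen h e _ he2 ((-1 : ℂ) + j)
          (aux_lie_eigen h x y _ _ hx' hjy) ?_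
        intro hc
        have : (j : ℂ) = ((-1 : ℤ) : ℂ) := by push_cast; linear_combination hc
        have : j = -1 := by exact_mod_cast this
        omega
    · rcases hy with hyℓ | ⟨j, hj, hjy⟩
      · have hy' : ⁅h, y⁆ = (-1 : ℂ) • y := eig _ _ (hℓsub hyℓ)
        refine aux_killing_eigen h e _ he2 ((i : ℂ) + (-1))
          (aux_lie_eigen h x y _ _ hix hy') ?_
        intro hc
        have : (i : ℂ) = ((-1 : ℤ) : ℂ) := by push_cast; linear_combination hc
        have : i = -1 := by exact_mod_cast this
        omega
      · refine aux_killing_eigen h e _ he2 ((i : ℂ) + j)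
          (aux_lie_eigen h x y _ _ hix hjy) ?_
        intro hc
        have h1 : ((i + j : ℤ) : ℂ) = ((-2 : ℤ) : ℂ) := by push_cast; linear_combination hc
        have : i + j = -2 := by exact_mod_cast h1
        omega
  -- For a generator `x`, we have `m ≤ K x`.
  have genK : ∀ x, (x ∈ ℓ ∨ ∃ i : ℤ, i ≤ -2 ∧ ⁅h, x⁆ = (i : ℂ) • x) → m ≤ K x := by
    intro x hx
    rw [hm]
    refine sup_le ?_ (iSup_le fun j => iSup_le fun hj => ?_)
    · intro y hy
      exact (hKmem x y).mpr (gen x hx y (Or.inl hy))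
    · intro y hy
      exact (hKmem x y).mpr (gen x hx y (Or.inr ⟨j, hj, eig _ _ hy⟩))
  -- The set of `x` with `∀ y ∈ m, κ(e,⁅y,x⁆) = 0` is a submodule.
  set S : Submodule ℂ L := ⨅ y ∈ m, K y with hS
  have hSmem : ∀ x, x ∈ S ↔ ∀ y ∈ m, killingForm ℂ L e ⁅y, x⁆ = 0 := by
    intro x
    simp only [hS, Submodule.mem_iInf]
    exact forall_congr' fun y => forall_congr' fun _ => hKmem y x
  have hmS : m ≤ S := by
    conv_lhs => rw [hm]
    refine sup_le ?_ (iSup_le fun i => iSup_le fun hi => ?_)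
    · intro x hx
      refine (hSmem x).mpr fun y hy => ?_
      have h0 := (hKmem x y).mp (genK x (Or.inl hx) hy)
      rw [← lie_skew y x, map_neg, h0, neg_zero]
    · intro x hx
      refine (hSmem x).mpr fun y hy => ?_
      have h0 := (hKmem x y).mp (genK x (Or.inr ⟨i, hi, eig _ _ hx⟩) hy)
      rw [← lie_skew y x, map_neg, h0, neg_zero]
  intro x hx y hy
  have := (hSmem y).mp (hmS hy) x hx
  exact this
end

section
/- Let Λ be a torsion-free abelian group with sub-semigroup Λ⁺ such that Λ⁺ is finitely generated and for any μ,ν ∈ Λ the set (μ+Λ⁺) ∩ (ν+Λ⁺) is nonempty. Then the relation on finitely generated graded modules 'M is negligible' (i.e. there exists ν with (ν+Λ⁺) ∩ Spec M = ∅) defines a Serre subcategory of the category of finitely generated graded modules over any noetherian directed algebra B: it is closed under subobjects, quotients, and extensions. -/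
/-- A directed algebra over `(Λ, Λ⁺)`: a family of abelian groups `B μ ν` (graded by
pairs `μ ≽ ν`, i.e. `B μ ν = 0` unless `μ - ν ∈ Λ⁺`) with associative biadditive
multiplication pairings `B μ ν ⊗ B ν ρ → B μ ρ`. -/
structure DirAlg (Λ : Type*) [AddCommGroup Λ] (P : AddSubmonoid Λ) where
  B : Λ → Λ → Type*
  [grp : ∀ μ ν, AddCommGroup (B μ ν)]
  mul : ∀ {μ ν ρ : Λ}, B μ ν → B ν ρ → B μ ρ
  mul_add : ∀ {μ ν ρ : Λ} (a : B μ ν) (b c : B ν ρ), mul a (b + c) = mul a b + mul a c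
  add_mul : ∀ {μ ν ρ : Λ} (a b : B μ ν) (c : B ν ρ), mul (a + b) c = mul a c + mul b c
  mul_assoc : ∀ {μ ν ρ τ : Λ} (a : B μ ν) (b : B ν ρ) (c : B ρ τ),
      mul (mul a b) c = mul a (mul b c)
  supported : ∀ {μ ν : Λ}, μ - ν ∉ P → ∀ x : B μ ν, x = 0

attribute [instance] DirAlg.grp

/-- A `Λ`-graded module over a directed algebra. -/
structure DirMod {Λ : Type*} [AddCommGroup Λ] {P : AddSubmonoid Λ} (A : DirAlg Λ P) where
  M : Λ → Type*
  [grp : ∀ ν, AddCommGroup (M ν)]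
  act : ∀ {μ ν : Λ}, A.B μ ν → M ν → M μ
  act_add : ∀ {μ ν : Λ} (b : A.B μ ν) (x y : M ν), act b (x + y) = act b x + act b y
  add_act : ∀ {μ ν : Λ} (b c : A.B μ ν) (x : M ν), act (b + c) x = act b x + act c x
  act_act : ∀ {μ ν ρ : Λ} (b : A.B μ ν) (c : A.B ν ρ) (x : M ρ),
      act b (act c x) = act (A.mul b c) x

attribute [instance] DirMod.grp

/-- Finite generation of a graded module over a directed algebra: there are finitely
many homogeneous elements `m i ∈ L (ν i)` with `L_μ = Σ_i B_{μ ν_i} · m_i` for all `μ`. -/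
def DirMod.FG {Λ : Type*} [AddCommGroup Λ] {P : AddSubmonoid Λ} {A : DirAlg Λ P}
    (L : DirMod A) : Prop :=
  ∃ (p : ℕ) (ν : Fin p → Λ) (m : ∀ i, L.M (ν i)),
    ∀ (μ : Λ) (x : L.M μ), ∃ b : ∀ i, A.B μ (ν i), x = ∑ i, L.act (b i) (m i)


/-- A graded module `M` over a directed algebra is negligible if there is `ν ∈ Λ` with
`(ν + Λ⁺) ∩ Spec M = ∅`, i.e. `M_μ = 0` whenever `μ − ν ∈ Λ⁺`. -/
def DirMod.Negligible {Λ : Type*} [AddCommGroup Λ] {P : AddSubmonoid Λ}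
    {A : DirAlg Λ P} (M : DirMod A) : Prop :=
  ∃ ν : Λ, ∀ μ : Λ, μ - ν ∈ P → ∀ x : M.M μ, x = 0

/-- Let `Λ` be a torsion-free abelian group with sub-semigroup `Λ⁺`
such that `Λ⁺ ∩ (−Λ⁺) = {0}`, `Λ⁺` is finitely generated, and for any `μ, ν ∈ Λ` the
set `(μ + Λ⁺) ∩ (ν + Λ⁺)` is nonempty.  Then the negligible modules form a Serre
subcategory of the category of finitely generated graded modules over a (noetherian)
directed algebra `B`: for every short exact sequence `0 → M' → M → M'' → 0` of finitely
generated graded modules (given componentwise by an injection `f` and a surjection `g`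
with `ker g = im f`, both compatible with the `B`-action), `M` is negligible if and only
if both `M'` and `M''` are; i.e. negligibility is closed under subobjects, quotients and
extensions. -/
theorem stmt17 {Λ : Type*} [AddCommGroup Λ] (P : AddSubmonoid Λ)
    (htf : ∀ (k : ℕ) (x : Λ), k ≠ 0 → k • x = 0 → x = 0)
    (hP : ∀ x ∈ P, -x ∈ P → x = 0)
    (hPfg : ∃ T : Finset Λ, AddSubmonoid.closure (T : Set Λ) = P)
    (hdir : ∀ μ ν : Λ, ∃ ρ : Λ, ρ - μ ∈ P ∧ ρ - ν ∈ P)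
    (A : DirAlg Λ P)
    (M' M M'' : DirMod A) (hfg' : M'.FG) (hfg : M.FG) (hfg'' : M''.FG)
    (f : ∀ ν, M'.M ν →+ M.M ν) (g : ∀ ν, M.M ν →+ M''.M ν)
    (hf : ∀ {μ ν : Λ} (b : A.B μ ν) (x : M'.M ν), f μ (M'.act b x) = M.act b (f ν x))
    (hg : ∀ {μ ν : Λ} (b : A.B μ ν) (x : M.M ν), g μ (M.act b x) = M''.act b (g ν x))
    (hinj : ∀ ν, Function.Injective (f ν))
    (hsurj : ∀ ν, Function.Surjective (g ν))
    (hexact : ∀ (ν : Λ) (x : M.M ν), g ν x = 0 ↔ ∃ y, f ν y = x) :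
    M.Negligible ↔ (M'.Negligible ∧ M''.Negligible) := by
  constructor
  · rintro ⟨ν, hν⟩
    refine ⟨⟨ν, fun μ hμ x => ?_⟩, ⟨ν, fun μ hμ x => ?_⟩⟩
    · apply hinj μ
      rw [map_zero]
      exact hν μ hμ _
    · obtain ⟨y, rfl⟩ := hsurj μ x
      rw [hν μ hμ y, map_zero]
  · rintro ⟨⟨ν', hν'⟩, ⟨ν'', hν''⟩⟩
    obtain ⟨ρ, h1, h2⟩ := hdir ν' ν''
    refine ⟨ρ, fun μ hμ x => ?_⟩
    have hμ' : μ - ν' ∈ P := by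
      have := P.add_mem hμ h1; simpa [sub_add_sub_cancel] using this
    have hμ'' : μ - ν'' ∈ P := by
      have := P.add_mem hμ h2; simpa [sub_add_sub_cancel] using this
    obtain ⟨y, rfl⟩ := (hexact μ x).1 (hν'' μ hμ'' _)
    rw [hν' μ hμ' y, map_zero]
end

section
/- Let B, B' be nonnegatively filtered algebras with gr B ≅ gr B' finitely generated commutative, and let K be a finitely generated (B,B')-bimodule whose characteristic variety (as a left B ⊗ B'^op-module) is contained in the diagonal Δ ⊂ Spec(gr B) × Spec(gr B'). Then K is finitely generated as a left B-module and as a right B'-module. -/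
open MulOpposite

/-- An ascending, exhaustive, multiplicative `ℤ`-filtration on a ring `A`. -/
structure RingFiltration (A : Type*) [Ring A] where
  F : ℤ → AddSubgroup A
  mono : Monotone F
  one_mem : (1 : A) ∈ F 0
  mul_mem : ∀ {i j : ℤ} {a b : A}, a ∈ F i → b ∈ F j → a * b ∈ F (i + j)
  exhaustive : ∀ a : A, ∃ i, a ∈ F i

/-- The filtration is nonnegative: `FₙA = 0` for `n < 0`. -/
def RingFiltration.Nonneg {A : Type*} [Ring A] (FA : RingFiltration A) : Prop :=
  ∀ n : ℤ, n < 0 → FA.F n = ⊥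

/-- The associated graded ring `gr A` is commutative. -/
def GrCommutative {A : Type*} [Ring A] (FA : RingFiltration A) : Prop :=
  ∀ {i j : ℤ} {a b : A}, a ∈ FA.F i → b ∈ FA.F j → a * b - b * a ∈ FA.F (i + j - 1)

/-- The associated graded ring `gr A` is a finitely generated algebra: there is a finite
set `s` of homogeneous elements (of recorded degrees) such that modulo lower filtration
degree every element of `FₙA` is a sum of monomials in the elements of `s` of total
degree at most `n`. -/
def GrFG {A : Type*} [Ring A] (FA : RingFiltration A) : Prop :=
  ∃ s : Finset (ℤ × A), (∀ p ∈ s, p.2 ∈ FA.F p.1) ∧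
    ∀ n : ℤ, ∀ x ∈ FA.F n, ∃ y ∈ FA.F (n - 1), x - y ∈ AddSubgroup.closure
      {z : A | ∃ l : List (ℤ × A), (∀ p ∈ l, p ∈ s) ∧
        (l.map Prod.fst).sum ≤ n ∧ z = (l.map Prod.snd).prod}

/-- A compatible ascending exhaustive filtration on a `(B, B')`-bimodule `K` (a left
`B`-module and right `B'`-module with commuting actions). -/
structure BimodFiltration {B B' K : Type*} [Ring B] [Ring B'] [AddCommGroup K]
    [Module B K] [Module B'ᵐᵒᵖ K]
    (FB : RingFiltration B) (FB' : RingFiltration B') where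
  F : ℤ → AddSubgroup K
  mono : Monotone F
  smul_mem : ∀ {i j : ℤ} {b : B} {x : K}, b ∈ FB.F i → x ∈ F j → b • x ∈ F (i + j)
  smul_mem' : ∀ {i j : ℤ} {b' : B'} {x : K}, b' ∈ FB'.F i → x ∈ F j →
      (op b') • x ∈ F (i + j)
  exhaustive : ∀ x : K, ∃ i, x ∈ F i

/-- The bimodule filtration is good: finitely many homogeneous elements generate, i.e.
every `x ∈ FₙK` is a sum of elements `a • v • b'` with `a ∈ F_iB`, `b' ∈ F_jB'`,
`v` a generator of degree `d` and `i + j + d ≤ n`.  (This says the Rees module of `K`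
over the Rees ring of `B ⊗ B'^op` is finitely generated, so in particular `K` is a
finitely generated bimodule.) -/
def BimodGood {B B' K : Type*} [Ring B] [Ring B'] [AddCommGroup K]
    [Module B K] [Module B'ᵐᵒᵖ K]
    (FB : RingFiltration B) (FB' : RingFiltration B')
    (FK : BimodFiltration (K := K) FB FB') : Prop :=
  ∃ s : Finset (ℤ × K), (∀ p ∈ s, p.2 ∈ FK.F p.1) ∧
    ∀ n : ℤ, ∀ x ∈ FK.F n,
      x ∈ ⨆ p ∈ s, ⨆ (i : ℤ) (j : ℤ) (_ : i + j + p.1 ≤ n),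
        AddSubgroup.closure
          {z : K | ∃ a ∈ FB.F i, ∃ b' ∈ FB'.F j, z = a • (op b') • p.2}

/-- The characteristic variety of `K` is contained in the diagonal
`Δ ⊆ Spec (gr B) × Spec (gr B')` (under an isomorphism `gr B ≅ gr B'`): for every
homogeneous symbol `b` of `gr B` there is a corresponding homogeneous symbol `b'` of
`gr B'` of the same degree such that the symbol of `b ⊗ 1 − 1 ⊗ b'` is nilpotent on
`gr K`, and symmetrically. -/
def DiagonalSupport {B B' K : Type*} [Ring B] [Ring B'] [AddCommGroup K]
    [Module B K] [Module B'ᵐᵒᵖ K]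
    (FB : RingFiltration B) (FB' : RingFiltration B')
    (FK : BimodFiltration (K := K) FB FB') : Prop :=
  (∀ (i : ℤ) (b : B), b ∈ FB.F i → ∃ b' ∈ FB'.F i, ∃ N : ℕ, 0 < N ∧
    ∀ (n : ℤ) (x : K), x ∈ FK.F n →
      (fun y : K => b • y - (op b') • y)^[N] x ∈ FK.F (n + N * i - 1)) ∧
  (∀ (i : ℤ) (b' : B'), b' ∈ FB'.F i → ∃ b ∈ FB.F i, ∃ N : ℕ, 0 < N ∧
    ∀ (n : ℤ) (x : K), x ∈ FK.F n →
      (fun y : K => b • y - (op b') • y)^[N] x ∈ FK.F (n + N * i - 1))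

/-!
By symmetry it suffices to show that `K` is finitely generated over `B`. Choose homogeneous
generators `c` of `gr B'` and, by the diagonal condition, partners `a` of the same degree such that
`a ⊗ 1 - 1 ⊗ c` is nilpotent, of order `N`, on `gr K`. As `gr B` and `gr B'` are commutative, words
in these operators can be reordered modulo lower order, so a word containing some letter at least
`N` times lowers the filtration. Since `1 ⊗ c = a ⊗ 1 - (a ⊗ 1 - 1 ⊗ c)`, every element of `Fₙ K`
is, modulo `Fₙ₋₁ K`, a `B`-combination of words applied to generators of `K`. By induction on the
filtration degree, the finitely many words in which each letter occurs fewer than `N` times,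
applied to the generators, span `K` over `B`.
-/

namespace RingFiltration

variable {A : Type*} [Ring A]

def op (FA : RingFiltration A) : RingFiltration Aᵐᵒᵖ where
  F i := (FA.F i).comap (opAddEquiv : A ≃+ Aᵐᵒᵖ).symm.toAddMonoidHom
  mono _ _ hij _ hx := FA.mono hij hx
  one_mem := FA.one_mem
  mul_mem {i j _ _} ha hb := by
    rw [add_comm]
    exact FA.mul_mem hb ha
  exhaustive a := FA.exhaustive a.unop

@[simp]
theorem mem_op {FA : RingFiltration A} {i : ℤ} {x : Aᵐᵒᵖ} : x ∈ FA.op.F i ↔ x.unop ∈ FA.F i :=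
  Iff.rfl

theorem Nonneg.op {FA : RingFiltration A} (h : FA.Nonneg) : FA.op.Nonneg := by
  intro n hn
  ext x
  simp [h n hn]

/-- `s` is a set of homogeneous generators of `gr A`. -/
def IsGrGenerating (FA : RingFiltration A) (s : Finset (ℤ × A)) : Prop :=
  (∀ p ∈ s, p.2 ∈ FA.F p.1) ∧
    ∀ n : ℤ, ∀ x ∈ FA.F n, ∃ y ∈ FA.F (n - 1), x - y ∈ AddSubgroup.closure
      {z : A | ∃ l : List (ℤ × A), (∀ p ∈ l, p ∈ s) ∧
        (l.map Prod.fst).sum ≤ n ∧ z = (l.map Prod.snd).prod}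

theorem grFG_iff {FA : RingFiltration A} : GrFG FA ↔ ∃ s, FA.IsGrGenerating s :=
  Iff.rfl

theorem IsGrGenerating.op [DecidableEq A] {FA : RingFiltration A} {s : Finset (ℤ × A)}
    (hs : FA.IsGrGenerating s) :
    FA.op.IsGrGenerating (s.image fun p => (p.1, MulOpposite.op p.2)) := by
  refine ⟨?_, fun n x hx => ?_⟩
  · simp only [Finset.mem_image]
    rintro _ ⟨p, hp, rfl⟩
    exact hs.1 p hp
  obtain ⟨y, hy, hxy⟩ := hs.2 n x.unop hx
  refine ⟨MulOpposite.op y, hy, ?_⟩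
  suffices h : AddSubgroup.closure {z : A | ∃ l : List (ℤ × A), (∀ p ∈ l, p ∈ s) ∧
      (l.map Prod.fst).sum ≤ n ∧ z = (l.map Prod.snd).prod} ≤
      (AddSubgroup.closure _).comap (opAddEquiv : A ≃+ Aᵐᵒᵖ).toAddMonoidHom from
    h hxy
  rw [AddSubgroup.closure_le]
  rintro _ ⟨l, hl, hdeg, rfl⟩
  refine AddSubgroup.subset_closure ⟨(l.map fun p => (p.1, MulOpposite.op p.2)).reverse, ?_, ?_, ?_⟩
  · simp only [List.mem_reverse, List.mem_map, Finset.mem_image]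
    rintro _ ⟨p, hp, rfl⟩
    exact ⟨p, hl p hp, rfl⟩
  · simpa [Function.comp_def] using hdeg
  · simp [MulOpposite.op_list_prod, Function.comp_def]

end RingFiltration

theorem GrCommutative.op {A : Type*} [Ring A] {FA : RingFiltration A} (h : GrCommutative FA) :
    GrCommutative FA.op := by
  intro i j a b ha hb
  rw [RingFiltration.mem_op, unop_sub, unop_mul, unop_mul, add_comm]
  exact h hb ha

theorem GrFG.op {A : Type*} [Ring A] {FA : RingFiltration A} (h : GrFG FA) : GrFG FA.op := by
  classical
  obtain ⟨s, hs⟩ := RingFiltration.grFG_iff.mp h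
  exact ⟨_, hs.op⟩

section EndFiltration

variable {K : Type*} [AddCommGroup K]

def endFiltration (S : ℤ → AddSubgroup K) (d : ℤ) : AddSubgroup (AddMonoid.End K) where
  carrier := {f | ∀ m, ∀ x ∈ S m, f x ∈ S (m + d)}
  add_mem' hf hg m x hx := add_mem (hf m x hx) (hg m x hx)
  zero_mem' _ _ _ := zero_mem _
  neg_mem' hf m x hx := neg_mem (hf m x hx)

variable {S : ℤ → AddSubgroup K} {f g : AddMonoid.End K} {d e : ℤ}

theorem endFiltration_mono (hS : Monotone S) : Monotone (endFiltration S) :=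
  fun _ _ hde _ hf m x hx => hS (by omega) (hf m x hx)

theorem one_mem_endFiltration : (1 : AddMonoid.End K) ∈ endFiltration S 0 := by
  intro m x hx
  simpa using hx

theorem mul_mem_endFiltration (hf : f ∈ endFiltration S d) (hg : g ∈ endFiltration S e) :
    f * g ∈ endFiltration S (d + e) := by
  intro m x hx
  rw [← add_comm e, ← add_assoc]
  exact hf _ _ (hg m x hx)

theorem mem_endFiltration_of_eq (hf : f ∈ endFiltration S d) (h : d = e) :
    f ∈ endFiltration S e :=
  h ▸ hf

theorem neg_pow_mem_endFiltration {N : ℕ} (hf : f ^ N ∈ endFiltration S d) :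
    (-f) ^ N ∈ endFiltration S d := by
  rw [neg_pow]
  rcases neg_one_pow_eq_or (AddMonoid.End K) N with h | h <;> rw [h]
  · rwa [one_mul]
  · rw [neg_one_mul]
    exact neg_mem hf

theorem mem_endFiltration_closure {T : ℤ → Set K}
    (hf : ∀ m, ∀ x ∈ T m, f x ∈ AddSubgroup.closure (T (m + d))) :
    f ∈ endFiltration (fun m => AddSubgroup.closure (T m)) d := fun m =>
  (AddSubgroup.closure_le (K := (AddSubgroup.closure (T (m + d))).comap f)).mpr (hf m)

theorem sup_mem_endFiltration {S' : ℤ → AddSubgroup K} (hf : f ∈ endFiltration S d)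
    (hf' : f ∈ endFiltration S' d) : f ∈ endFiltration (S ⊔ S') d := by
  intro m x hx
  obtain ⟨y, hy, z, hz, rfl⟩ := AddSubgroup.mem_sup.mp hx
  rw [map_add]
  exact add_mem (AddSubgroup.mem_sup_left (hf m y hy)) (AddSubgroup.mem_sup_right (hf' m z hz))

theorem mem_endFiltration_shift (k : ℤ) (hf : f ∈ endFiltration S d) :
    f ∈ endFiltration (fun m => S (m - k)) d := by
  intro m x hx
  show f x ∈ S (m + d - k)
  rw [show m + d - k = m - k + d by ring]
  exact hf _ x hx

theorem pow_mem_endFiltration_of_iterate {N : ℕ}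
    (hf : ∀ (n : ℤ) (x : K), x ∈ S n → (⇑f)^[N] x ∈ S (n + d)) :
    f ^ N ∈ endFiltration S d := fun m x hx => by
  rw [AddMonoid.End.coe_pow]
  exact hf m x hx

variable {ι : Type*} {D : ι → AddMonoid.End K} {deg : ι → ℤ}

theorem list_prod_mem_endFiltration {u : List ι}
    (hD : ∀ g ∈ u, D g ∈ endFiltration S (deg g)) :
    (u.map D).prod ∈ endFiltration S (u.map deg).sum := by
  induction u with
  | nil => exact one_mem_endFiltration
  | cons g u ih =>
    simp only [List.map_cons, List.prod_cons, List.sum_cons]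
    exact mul_mem_endFiltration (hD g List.mem_cons_self)
      (ih fun h hh => hD h (List.mem_cons_of_mem g hh))

variable (hD : ∀ g, D g ∈ endFiltration S (deg g))
  (hcomm : ∀ g h, D g * D h - D h * D g ∈ endFiltration S (deg g + deg h - 1))
include hD hcomm

theorem list_prod_sub_mem_endFiltration_of_perm {u u' : List ι} (hu : u.Perm u') :
    (u.map D).prod - (u'.map D).prod ∈ endFiltration S ((u.map deg).sum - 1) := by
  induction hu with
  | nil =>
    rw [sub_self]
    exact zero_mem _
  | cons g _ ih =>
    simp only [List.map_cons, List.prod_cons, List.sum_cons, ← mul_sub]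
    exact mem_endFiltration_of_eq (mul_mem_endFiltration (hD g) ih) (by ring)
  | swap g h u =>
    simp only [List.map_cons, List.prod_cons, List.sum_cons, ← mul_assoc, ← sub_mul]
    exact mem_endFiltration_of_eq
      (mul_mem_endFiltration (hcomm h g) (list_prod_mem_endFiltration fun g _ => hD g)) (by ring)
  | @trans u₁ u₂ u₃ h₁₂ _ ih₁₂ ih₂₃ =>
    rw [← sub_add_sub_cancel _ (u₂.map D).prod, (h₁₂.map deg).sum_eq]
    rw [(h₁₂.map deg).sum_eq] at ih₁₂
    exact add_mem ih₁₂ ih₂₃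

theorem list_prod_mem_endFiltration_of_le_count [DecidableEq ι] {g : ι} {N : ℕ}
    (hg : D g ^ N ∈ endFiltration S (N * deg g - 1)) {u : List ι} (hu : N ≤ u.count g) :
    (u.map D).prod ∈ endFiltration S ((u.map deg).sum - 1) := by
  obtain ⟨r, hr⟩ := (List.replicate_sublist_iff.mpr hu).exists_perm_append
  have hdeg : (u.map deg).sum = N * deg g + (r.map deg).sum := by
    simp [(hr.map deg).sum_eq]
  rw [← sub_add_cancel (u.map D).prod ((List.replicate N g ++ r).map D).prod]
  refine add_mem (list_prod_sub_mem_endFiltration_of_perm hD hcomm hr) ?_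
  simp only [List.map_append, List.map_replicate, List.prod_append, List.prod_replicate]
  exact mem_endFiltration_of_eq
    (mul_mem_endFiltration hg (list_prod_mem_endFiltration fun g _ => hD g)) (by rw [hdeg]; ring)

end EndFiltration

theorem List.finite_setOf_forall_count_lt {ι : Type*} [Fintype ι] [DecidableEq ι] (N : ι → ℕ) :
    {u : List ι | ∀ g, u.count g < N g}.Finite := by
  refine (List.finite_length_le ι (∑ g, N g)).subset fun u hu => ?_
  have hlen : u.length = ∑ g, u.count g := by
    simpa using (Multiset.sum_count_eq_card (s := Finset.univ) (m := (u : Multiset ι))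
      (fun _ _ => Finset.mem_univ _)).symm
  rw [Set.mem_ofPred_eq, hlen]
  exact Finset.sum_le_sum fun g _ => (hu g).le

theorem RingFiltration.IsGrGenerating.map_mem_endFiltration {C K : Type*} [Ring C]
    [AddCommGroup K] {FC : RingFiltration C} {s : Finset (ℤ × C)} (hs : FC.IsGrGenerating s)
    (σ : C →+* AddMonoid.End K) {S : ℤ → AddSubgroup K} (hS : Monotone S)
    (hgen : ∀ p ∈ s, σ p.2 ∈ endFiltration S p.1)
    (hlow : ∀ n, ∀ c ∈ FC.F (n - 1), σ c ∈ endFiltration S n) {n : ℤ} {c : C}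
    (hc : c ∈ FC.F n) : σ c ∈ endFiltration S n := by
  obtain ⟨y, hy, hcy⟩ := hs.2 n c hc
  rw [← sub_add_cancel c y, map_add]
  refine add_mem ?_ (hlow n y hy)
  suffices h : AddSubgroup.closure _ ≤ (endFiltration S n).comap σ.toAddMonoidHom from h hcy
  rw [AddSubgroup.closure_le]
  rintro _ ⟨l, hl, hdeg, rfl⟩
  change σ (l.map Prod.snd).prod ∈ endFiltration S n
  rw [map_list_prod, List.map_map]
  exact endFiltration_mono hS hdeg
    (list_prod_mem_endFiltration (deg := Prod.fst) fun p hp => hgen p (hl p hp))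

theorem AddSubgroup.eq_top_of_filtration_step {K : Type*} [AddCommGroup K]
    {F : ℤ → AddSubgroup K} (hF : Monotone F) (hexh : ∀ x, ∃ n, x ∈ F n) {M : AddSubgroup K}
    {n₀ : ℤ} (h₀ : F n₀ ≤ M) (hstep : ∀ n, F (n - 1) ≤ M → F n ≤ M) : M = ⊤ := by
  have hle : ∀ n, n₀ ≤ n → F n ≤ M := by
    intro n hn
    induction n, hn using Int.leInduction with
    | base => exact h₀
    | succ n _ ih => exact hstep (n + 1) (by simpa using ih)
  refine eq_top_iff.mpr fun x _ => ?_
  obtain ⟨n, hn⟩ := hexh x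
  exact hle (max n n₀) (le_max_right _ _) (hF (le_max_left _ _) hn)

section

variable {A C : Type*} [Ring A] [Ring C]

structure CompatibleFiltration (FA : RingFiltration A) (FC : RingFiltration C) (K : Type*)
    [AddCommGroup K] [Module A K] [Module C K] where
  F : ℤ → AddSubgroup K
  mono : Monotone F
  smul_mem_fst : ∀ i, ∀ a ∈ FA.F i, Module.toAddMonoidEnd A K a ∈ endFiltration F i
  smul_mem_snd : ∀ i, ∀ c ∈ FC.F i, Module.toAddMonoidEnd C K c ∈ endFiltration F i
  exhaustive : ∀ x : K, ∃ n, x ∈ F n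

structure SymbolPairs (FA : RingFiltration A) (FC : RingFiltration C) (ι : Type*) where
  deg : ι → ℤ
  fst : ι → A
  snd : ι → C
  fst_mem : ∀ g, fst g ∈ FA.F (deg g)
  snd_mem : ∀ g, snd g ∈ FC.F (deg g)

variable {K : Type*} [AddCommGroup K] [Module A K] [Module C K]
  {FA : RingFiltration A} {FC : RingFiltration C}

variable (K) in
def SymbolPairs.toEnd {ι : Type*} (P : SymbolPairs FA FC ι) (g : ι) : AddMonoid.End K :=
  Module.toAddMonoidEnd A K (P.fst g) - Module.toAddMonoidEnd C K (P.snd g)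

namespace CompatibleFiltration

variable (FK : CompatibleFiltration FA FC K)

def swap : CompatibleFiltration FC FA K where
  F := FK.F
  mono := FK.mono
  smul_mem_fst := FK.smul_mem_snd
  smul_mem_snd := FK.smul_mem_fst
  exhaustive := FK.exhaustive

/-- `s` generates `gr K` over `gr A ⊗ gr C`: the filtration is good. -/
def IsGeneratedBy (s : Finset (ℤ × K)) : Prop :=
  (∀ p ∈ s, p.2 ∈ FK.F p.1) ∧ ∀ n, FK.F n ≤ AddSubgroup.closure
    {x | ∃ p ∈ s, ∃ i j, i + j + p.1 ≤ n ∧ ∃ a ∈ FA.F i, ∃ c ∈ FC.F j, x = a • c • p.2}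

/-- Every symbol `c` of `gr C` has a partner `a` in `gr A` with `a ⊗ 1 - 1 ⊗ c` nilpotent on
`gr K`: one half of `DiagonalSupport`. -/
def DiagonalOnSnd : Prop :=
  ∀ i, ∀ c ∈ FC.F i, ∃ a ∈ FA.F i, ∃ N : ℕ,
    (Module.toAddMonoidEnd A K a - Module.toAddMonoidEnd C K c) ^ N ∈
      endFiltration FK.F (N * i - 1)

variable {FK} {s : Finset (ℤ × K)}

theorem IsGeneratedBy.swap [SMulCommClass A C K] (hs : FK.IsGeneratedBy s) :
    FK.swap.IsGeneratedBy s := by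
  refine ⟨hs.1, fun n => (hs.2 n).trans (AddSubgroup.closure_mono ?_)⟩
  rintro _ ⟨p, hp, i, j, hij, a, ha, c, hc, rfl⟩
  exact ⟨p, hp, j, i, by omega, c, hc, a, ha, smul_comm a c p.2⟩

theorem IsGeneratedBy.eq_bot (hAneg : FA.Nonneg) (hCneg : FC.Nonneg) (hs : FK.IsGeneratedBy s)
    {n : ℤ} (hn : ∀ p ∈ s, n < p.1) : FK.F n = ⊥ := by
  refine eq_bot_iff.mpr ((hs.2 n).trans ((AddSubgroup.closure_le _).mpr ?_))
  rintro _ ⟨p, hp, i, j, hij, a, ha, c, hc, rfl⟩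
  rcases (show i < 0 ∨ j < 0 by have := hn p hp; omega) with hi | hj
  · rw [hAneg i hi, AddSubgroup.mem_bot] at ha
    simp [ha]
  · rw [hCneg j hj, AddSubgroup.mem_bot] at hc
    simp [hc]

variable (FK) {ι : Type*} (P : SymbolPairs FA FC ι)

theorem toEnd_mem (g : ι) : P.toEnd K g ∈ endFiltration FK.F (P.deg g) :=
  sub_mem (FK.smul_mem_fst _ _ (P.fst_mem g)) (FK.smul_mem_snd _ _ (P.snd_mem g))

theorem toEnd_commutator_mem [SMulCommClass A C K] (hAcomm : GrCommutative FA)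
    (hCcomm : GrCommutative FC) (g h : ι) :
    P.toEnd K g * P.toEnd K h - P.toEnd K h * P.toEnd K g ∈
      endFiltration FK.F (P.deg g + P.deg h - 1) := by
  have hcomm : ∀ (a : A) (c : C),
      Module.toAddMonoidEnd A K a * Module.toAddMonoidEnd C K c =
        Module.toAddMonoidEnd C K c * Module.toAddMonoidEnd A K a :=
    fun a c => AddMonoidHom.ext fun x => smul_comm a c x
  have hsplit : P.toEnd K g * P.toEnd K h - P.toEnd K h * P.toEnd K g =
      Module.toAddMonoidEnd A K (P.fst g * P.fst h - P.fst h * P.fst g) +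
        Module.toAddMonoidEnd C K (P.snd g * P.snd h - P.snd h * P.snd g) := by
    simp only [SymbolPairs.toEnd, sub_mul, mul_sub, map_sub, map_mul, hcomm]
    abel
  rw [hsplit]
  exact add_mem (FK.smul_mem_fst _ _ (hAcomm (P.fst_mem g) (P.fst_mem h)))
    (FK.smul_mem_snd _ _ (hCcomm (P.snd_mem g) (P.snd_mem h)))

def wordFiltration (s : Finset (ℤ × K)) : ℤ → AddSubgroup K :=
  (fun m => AddSubgroup.closure {x | ∃ i, ∃ b ∈ FA.F i, ∃ u : List ι, ∃ p ∈ s,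
    i + (u.map P.deg).sum + p.1 ≤ m ∧ x = b • (u.map (P.toEnd K)).prod p.2}) ⊔
  fun m => FK.F (m - 1)

theorem wordFiltration_mono (s : Finset (ℤ × K)) : Monotone (FK.wordFiltration P s) := by
  intro m m' hm
  refine sup_le_sup (AddSubgroup.closure_mono ?_) (FK.mono (by omega))
  rintro _ ⟨i, b, hb, u, p, hp, hdeg, rfl⟩
  exact ⟨i, b, hb, u, p, hp, hdeg.trans hm, rfl⟩

theorem wordFiltration_le (hs : ∀ p ∈ s, p.2 ∈ FK.F p.1) (m : ℤ) :
    FK.wordFiltration P s m ≤ FK.F m := by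
  refine sup_le ((AddSubgroup.closure_le _).mpr ?_) (FK.mono (by omega))
  rintro _ ⟨i, b, hb, u, p, hp, hdeg, rfl⟩
  have hword := list_prod_mem_endFiltration (u := u) fun g _ => FK.toEnd_mem P g
  refine FK.mono ?_ (FK.smul_mem_fst i b hb _ _ (hword _ _ (hs p hp)))
  omega

theorem fst_smul_mem_wordFiltration {i : ℤ} {a : A} (ha : a ∈ FA.F i) :
    Module.toAddMonoidEnd A K a ∈ endFiltration (FK.wordFiltration P s) i := by
  refine sup_mem_endFiltration (mem_endFiltration_closure ?_)
    (mem_endFiltration_shift 1 (FK.smul_mem_fst i a ha))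
  rintro m _ ⟨i', b, hb, u, p, hp, hdeg, rfl⟩
  exact AddSubgroup.subset_closure ⟨i + i', a * b, FA.mul_mem ha hb, u, p, hp, by omega,
    (mul_smul a b _).symm⟩

theorem snd_letter_smul_mem_wordFiltration [SMulCommClass A C K] (g : ι) :
    Module.toAddMonoidEnd C K (P.snd g) ∈ endFiltration (FK.wordFiltration P s) (P.deg g) := by
  refine sup_mem_endFiltration (mem_endFiltration_closure ?_)
    (mem_endFiltration_shift 1 (FK.smul_mem_snd _ _ (P.snd_mem g)))
  rintro m _ ⟨i, b, hb, u, p, hp, hdeg, rfl⟩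
  set w := (u.map (P.toEnd K)).prod p.2
  have hsplit : P.snd g • b • w = (b * P.fst g) • w - b • P.toEnd K g w := by
    change _ = _ - b • (P.fst g • w - P.snd g • w)
    rw [mul_smul, smul_sub, sub_sub_cancel, smul_comm b]
  change P.snd g • b • w ∈ _
  rw [hsplit]
  refine sub_mem (AddSubgroup.subset_closure ⟨i + P.deg g, _, FA.mul_mem hb (P.fst_mem g), u, p,
    hp, by omega, rfl⟩) (AddSubgroup.subset_closure ⟨i, b, hb, g :: u, p, hp, ?_, by simp [w]⟩)
  simp only [List.map_cons, List.sum_cons]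
  omega

theorem snd_smul_mem_wordFiltration [SMulCommClass A C K] (hs : ∀ p ∈ s, p.2 ∈ FK.F p.1)
    {s' : Finset (ℤ × C)} (hs' : FC.IsGrGenerating s')
    (hP : ∀ p ∈ s', ∃ g, P.deg g = p.1 ∧ P.snd g = p.2) {j : ℤ} {c : C} (hc : c ∈ FC.F j) :
    Module.toAddMonoidEnd C K c ∈ endFiltration (FK.wordFiltration P s) j := by
  refine hs'.map_mem_endFiltration _ (FK.wordFiltration_mono P s) (fun p hp => ?_)
    (fun n c hc m x hx => ?_) hc
  · obtain ⟨g, hdeg, hsnd⟩ := hP p hp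
    rw [← hdeg, ← hsnd]
    exact FK.snd_letter_smul_mem_wordFiltration P g
  · refine AddSubgroup.mem_sup_right ?_
    change _ ∈ FK.F (m + n - 1)
    rw [show m + n - 1 = m + (n - 1) by ring]
    exact FK.smul_mem_snd _ c hc m x (FK.wordFiltration_le P hs m hx)

variable {FK} in
theorem IsGeneratedBy.le_wordFiltration (hs : FK.IsGeneratedBy s)
    (hsnd : ∀ j, ∀ c ∈ FC.F j,
      Module.toAddMonoidEnd C K c ∈ endFiltration (FK.wordFiltration P s) j)
    (n : ℤ) : FK.F n ≤ FK.wordFiltration P s n := by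
  refine (hs.2 n).trans ((AddSubgroup.closure_le _).mpr ?_)
  rintro _ ⟨p, hp, i, j, hij, a, ha, c, hc, rfl⟩
  have hgen : p.2 ∈ FK.wordFiltration P s p.1 :=
    AddSubgroup.mem_sup_left (AddSubgroup.subset_closure ⟨0, 1, FA.one_mem, [], p, hp, by simp,
      by simp⟩)
  exact FK.wordFiltration_mono P s (by omega)
    (FK.fst_smul_mem_wordFiltration P ha _ _ (hsnd j c hc _ _ hgen))

def reducedWordImages [DecidableEq ι] (s : Finset (ℤ × K)) (N : ι → ℕ) : Set K :=
  (fun q : List ι × (ℤ × K) => (q.1.map (P.toEnd K)).prod q.2.2) ''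
    ({u | ∀ g, u.count g < N g} ×ˢ s)

theorem reducedWordImages_finite [Fintype ι] [DecidableEq ι] (N : ι → ℕ) :
    (reducedWordImages P s N).Finite :=
  ((List.finite_setOf_forall_count_lt N).prod s.finite_toSet).image _

/-- A word that is not reduced contains some `g` at least `N g` times, and reordering it to start
with that power lowers its degree. -/
theorem wordFiltration_le_span [SMulCommClass A C K] [DecidableEq ι] (hAneg : FA.Nonneg)
    (hAcomm : GrCommutative FA) (hCcomm : GrCommutative FC) (hs : ∀ p ∈ s, p.2 ∈ FK.F p.1)
    (N : ι → ℕ) (hN : ∀ g, P.toEnd K g ^ N g ∈ endFiltration FK.F (N g * P.deg g - 1)) {n : ℤ}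
    (hlow : FK.F (n - 1) ≤ (Submodule.span A (reducedWordImages P s N)).toAddSubgroup) :
    FK.wordFiltration P s n ≤ (Submodule.span A (reducedWordImages P s N)).toAddSubgroup := by
  refine sup_le ((AddSubgroup.closure_le _).mpr ?_) hlow
  rintro _ ⟨i, b, hb, u, p, hp, hdeg, rfl⟩
  rcases lt_or_ge i 0 with hi | hi
  · rw [hAneg i hi, AddSubgroup.mem_bot] at hb
    simp [hb]
  refine Submodule.smul_mem _ b ?_
  by_cases hu : ∀ g, u.count g < N g
  · exact Submodule.subset_span ⟨(u, p), ⟨hu, hp⟩, rfl⟩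
  obtain ⟨g, hg⟩ := not_forall.mp hu
  have hlower := list_prod_mem_endFiltration_of_le_count (FK.toEnd_mem P)
    (FK.toEnd_commutator_mem P hAcomm hCcomm) (hN g) (not_lt.mp hg)
  exact hlow (FK.mono (by omega) (hlower _ _ (hs p hp)))

theorem finite_fst [SMulCommClass A C K] (hAneg : FA.Nonneg) (hCneg : FC.Nonneg)
    (hAcomm : GrCommutative FA) (hCcomm : GrCommutative FC) (hCfg : GrFG FC)
    (hs : FK.IsGeneratedBy s) (hdiag : FK.DiagonalOnSnd) : Module.Finite A K := by
  classical
  obtain ⟨s', hs'⟩ := RingFiltration.grFG_iff.mp hCfg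
  choose a ha N hN using fun g : s' => hdiag g.1.1 g.1.2 (hs'.1 g.1 g.2)
  let P : SymbolPairs FA FC s' := ⟨fun g => g.1.1, a, fun g => g.1.2, ha, fun g => hs'.1 g.1 g.2⟩
  obtain ⟨n₀, hn₀⟩ := (s.finite_toSet.image Prod.fst).bddBelow
  have hbot : FK.F (n₀ - 1) = ⊥ := hs.eq_bot hAneg hCneg fun p hp => by
    have := hn₀ ⟨p, hp, rfl⟩
    omega
  have hsnd : ∀ j, ∀ c ∈ FC.F j, Module.toAddMonoidEnd C K c ∈
      endFiltration (FK.wordFiltration P s) j := fun j c hc =>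
    FK.snd_smul_mem_wordFiltration P hs.1 hs' (fun p hp => ⟨⟨p, hp⟩, rfl, rfl⟩) hc
  rw [Module.finite_def, Submodule.fg_def]
  refine ⟨_, reducedWordImages_finite P (s := s) N, ?_⟩
  rw [← Submodule.toAddSubgroup_eq_top]
  refine AddSubgroup.eq_top_of_filtration_step FK.mono FK.exhaustive (hbot ▸ bot_le)
    fun n hlow => (hs.le_wordFiltration P hsnd n).trans
      (FK.wordFiltration_le_span P hAneg hAcomm hCcomm hs.1 N hN hlow)

end CompatibleFiltration

end

section

variable {B B' K : Type*} [Ring B] [Ring B'] [AddCommGroup K] [Module B K] [Module B'ᵐᵒᵖ K]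
  {FB : RingFiltration B} {FB' : RingFiltration B'}

def BimodFiltration.toCompatibleFiltration (FK : BimodFiltration (K := K) FB FB') :
    CompatibleFiltration FB FB'.op K where
  F := FK.F
  mono := FK.mono
  smul_mem_fst i _ hb m _ hx := add_comm i m ▸ FK.smul_mem hb hx
  smul_mem_snd i c hc m _ hx := add_comm i m ▸ FK.smul_mem' (b' := c.unop) hc hx
  exhaustive := FK.exhaustive

variable {FK : BimodFiltration (K := K) FB FB'}

theorem BimodGood.exists_isGeneratedBy (hgood : BimodGood FB FB' FK) :
    ∃ s, FK.toCompatibleFiltration.IsGeneratedBy s := by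
  obtain ⟨s, hs, hgen⟩ := hgood
  refine ⟨s, hs, fun n x hx => ?_⟩
  refine SetLike.le_def.mp ?_ (hgen n x hx)
  refine iSup₂_le fun p hp => iSup₂_le fun i j => iSup_le fun hij => AddSubgroup.closure_mono ?_
  rintro _ ⟨a, ha, b', hb', rfl⟩
  exact ⟨p, hp, i, j, hij, a, ha, op b', hb', rfl⟩

theorem DiagonalSupport.diagonalOnSnd (hdiag : DiagonalSupport FB FB' FK) :
    FK.toCompatibleFiltration.DiagonalOnSnd := by
  intro i c hc
  obtain ⟨b, hb, N, -, hN⟩ := hdiag.2 i c.unop hc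
  refine ⟨b, hb, N, pow_mem_endFiltration_of_iterate fun n x hx => ?_⟩
  rw [← add_sub_assoc]
  exact hN n x hx

theorem DiagonalSupport.diagonalOnSnd_swap (hdiag : DiagonalSupport FB FB' FK) :
    FK.toCompatibleFiltration.swap.DiagonalOnSnd := by
  intro i b hb
  obtain ⟨b', hb', N, -, hN⟩ := hdiag.1 i b hb
  refine ⟨op b', hb', N, ?_⟩
  rw [← neg_sub (Module.toAddMonoidEnd B K b)]
  refine neg_pow_mem_endFiltration (pow_mem_endFiltration_of_iterate fun n x hx => ?_)
  rw [← add_sub_assoc]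
  exact hN n x hx

end

/-- Let `B`, `B'` be nonnegatively filtered algebras with
`gr B ≅ gr B'` finitely generated commutative, and let `K` be a finitely generated
`(B, B')`-bimodule (with a good filtration) whose characteristic variety, as a left
`B ⊗ B'^op`-module, is contained in the diagonal `Δ ⊆ Spec (gr B) × Spec (gr B')`
(a weak Harish-Chandra bimodule).  Then `K` is finitely generated as a left `B`-module
and as a right `B'`-module. -/
theorem stmt18 {B B' K : Type*} [Ring B] [Ring B'] [AddCommGroup K]
    [Module B K] [Module B'ᵐᵒᵖ K] [SMulCommClass B B'ᵐᵒᵖ K]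
    (FB : RingFiltration B) (FB' : RingFiltration B')
    (hBneg : FB.Nonneg) (hB'neg : FB'.Nonneg)
    (hBcomm : GrCommutative FB) (hB'comm : GrCommutative FB')
    (hBfg : GrFG FB) (hB'fg : GrFG FB')
    (FK : BimodFiltration (K := K) FB FB')
    (hgood : BimodGood FB FB' FK)
    (hdiag : DiagonalSupport FB FB' FK) :
    Module.Finite B K ∧ Module.Finite B'ᵐᵒᵖ K := by
  have := SMulCommClass.symm B B'ᵐᵒᵖ K
  obtain ⟨s, hs⟩ := hgood.exists_isGeneratedBy
  exact ⟨FK.toCompatibleFiltration.finite_fst hBneg hB'neg.op hBcomm hB'comm.op hB'fg.op hs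
      hdiag.diagonalOnSnd,
    FK.toCompatibleFiltration.swap.finite_fst hB'neg.op hBneg hB'comm.op hBcomm hBfg hs.swap
      hdiag.diagonalOnSnd_swap⟩
end
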